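/- arXiv:1308.4438 — 3 statements merged into one kernel-verified Lean document; each statement's English description precedes it below -/
import Mathlib

section
/- Let F be an algebraically closed field and d, n positive integers. If the variety N(d,n) of d-tuples of pairwise commuting nilpotent n×n matrices over F is irreducible, then every unital subalgebra of M_n(F) generated by d pairwise commuting nilpotent matrices has F-dimension at most n. -/
/-- The Zariski topology on the space of `d`-tuples of `n × n` matrices over `F`. -/
instance tupleZariskiTop (F : Type*) [Field F] (d n : ℕ) :
    TopologicalSpace (Fin d → Matrix (Fin n) (Fin n) F) :=
  TopologicalSpace.generateFrom
    { U | ∃ p : MvPolynomial (Fin d × Fin n × Fin n) F,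
        U = {A | MvPolynomial.eval (fun q => A q.1 q.2.1 q.2.2) p ≠ 0} }

/-- `N(d,n)`: the set of `d`-tuples of pairwise commuting nilpotent `n × n` matrices. -/
def NilTuples (F : Type*) [Field F] (d n : ℕ) : Set (Fin d → Matrix (Fin n) (Fin n) F) :=
  {A | (∀ i j, Commute (A i) (A j)) ∧ ∀ i, IsNilpotent (A i)}

namespace Stmt6Aux


open Matrix MvPolynomial Module Submodule

variable {F : Type*} [Field F] {d n : ℕ}

/-- product of two list-products of pairwise commuting factors -/
lemma list_prod_map_mul {R ι : Type*} [Monoid R] (l : List ι) (f g : ι → R)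
    (h : ∀ i ∈ l, ∀ j ∈ l, Commute (f i) (g j)) :
    (l.map f).prod * (l.map g).prod = (l.map fun i => f i * g i).prod := by
  induction l with
  | nil => simp
  | cons a l ih =>
    simp only [List.map_cons, List.prod_cons]
    have hc : Commute (g a) ((l.map f).prod) := by
      apply Commute.list_prod_right
      intro x hx
      obtain ⟨i, hi, rfl⟩ := List.mem_map.mp hx
      exact (h i (List.mem_cons_of_mem _ hi) a List.mem_cons_self).symm
    have ihl := ih (fun i hi j hj =>
      h i (List.mem_cons_of_mem _ hi) j (List.mem_cons_of_mem _ hj))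
    calc f a * (l.map f).prod * (g a * (l.map g).prod)
        = f a * (((l.map f).prod * g a) * (l.map g).prod) := by
          rw [mul_assoc, mul_assoc]
      _ = f a * ((g a * (l.map f).prod) * (l.map g).prod) := by rw [hc.eq]
      _ = (f a * g a) * ((l.map f).prod * (l.map g).prod) := by
          simp only [mul_assoc]
      _ = (f a * g a) * (l.map fun i => f i * g i).prod := by rw [ihl]

lemma list_prod_map_eq_single {R ι : Type*} [Monoid R] (l : List ι) (f : ι → R) (i : ι)
    (hnd : l.Nodup) (hi : i ∈ l) (h1 : ∀ j ∈ l, j ≠ i → f j = 1) :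
    (l.map f).prod = f i := by
  induction l with
  | nil => simp at hi
  | cons a l ih =>
    simp only [List.map_cons, List.prod_cons]
    rcases List.mem_cons.mp hi with rfl | hi'
    · have : (l.map f).prod = 1 := by
        apply List.prod_eq_one
        intro x hx
        obtain ⟨j, hj, rfl⟩ := List.mem_map.mp hx
        exact h1 j (List.mem_cons_of_mem _ hj) (fun hji => (List.nodup_cons.mp hnd).1 (hji ▸ hj))
      rw [this, mul_one]
    · have ha : f a = 1 := h1 a List.mem_cons_self
        (fun hai => (List.nodup_cons.mp hnd).1 (hai ▸ hi'))
      rw [ha, one_mul]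
      exact ih (List.nodup_cons.mp hnd).2 hi' (fun j hj hji => h1 j (List.mem_cons_of_mem _ hj) hji)

/-- the (noncommutative) monomial `∏ i, A i ^ k i` in list order -/
def mon {R : Type*} [Semiring R] (A : Fin d → Matrix (Fin n) (Fin n) R) (k : Fin d → ℕ) :
    Matrix (Fin n) (Fin n) R :=
  ((List.finRange d).map fun i => A i ^ k i).prod

lemma mon_map {R S : Type*} [Semiring R] [Semiring S] (φ : R →+* S)
    (A : Fin d → Matrix (Fin n) (Fin n) R) (k : Fin d → ℕ) :
    φ.mapMatrix (mon A k) = mon (fun i => φ.mapMatrix (A i)) k := by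
  unfold mon
  rw [map_list_prod (φ.mapMatrix : Matrix (Fin n) (Fin n) R →+* Matrix (Fin n) (Fin n) S),
    List.map_map]
  congr 1
  apply List.map_congr_left
  intro i _
  simp [map_pow]

lemma mon_mul {R : Type*} [Semiring R] {A : Fin d → Matrix (Fin n) (Fin n) R}
    (hc : ∀ i j, Commute (A i) (A j)) (a b : Fin d → ℕ) :
    mon A a * mon A b = mon A (a + b) := by
  unfold mon
  rw [list_prod_map_mul _ _ _ (fun i _ j _ => (hc i j).pow_pow _ _)]
  congr 1
  apply List.map_congr_left
  intro i _
  rw [Pi.add_apply, pow_add]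

lemma mon_single {R : Type*} [Semiring R] (A : Fin d → Matrix (Fin n) (Fin n) R)
    (i : Fin d) (m : ℕ) :
    mon A (Pi.single i m) = A i ^ m := by
  unfold mon
  rw [list_prod_map_eq_single _ _ i (List.nodup_finRange d) (List.mem_finRange i)]
  · rw [Pi.single_eq_same]
  · intro j _ hji
    rw [Pi.single_eq_of_ne hji, pow_zero]

lemma mon_zero {R : Type*} [Semiring R] (A : Fin d → Matrix (Fin n) (Fin n) R) :
    mon A 0 = 1 := by
  unfold mon
  apply List.prod_eq_one
  intro x hx
  obtain ⟨j, _, rfl⟩ := List.mem_map.mp hx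
  simp

lemma mon_eq_zero {R : Type*} [Semiring R] (A : Fin d → Matrix (Fin n) (Fin n) R)
    {k : Fin d → ℕ} {i : Fin d} (hki : n ≤ k i) (hAi : A i ^ n = 0) :
    mon A k = 0 := by
  apply List.prod_eq_zero
  apply List.mem_map.mpr
  exact ⟨i, List.mem_finRange i, by rw [pow_eq_zero_of_le hki hAi]⟩


/-! ### generic matrices -/

/-- tuple of generic matrices with polynomial entries -/
noncomputable def gen (F : Type*) [Field F] (d n : ℕ) :
    Fin d → Matrix (Fin n) (Fin n) (MvPolynomial (Fin d × Fin n × Fin n) F) :=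
  fun q => Matrix.of fun i j => X (q, i, j)

/-- evaluation ring hom at a tuple of matrices -/
def evalR (A : Fin d → Matrix (Fin n) (Fin n) F) :
    MvPolynomial (Fin d × Fin n × Fin n) F →+* F :=
  eval (fun q : Fin d × Fin n × Fin n => A q.1 q.2.1 q.2.2)

lemma evalR_apply (A : Fin d → Matrix (Fin n) (Fin n) F)
    (p : MvPolynomial (Fin d × Fin n × Fin n) F) :
    evalR A p = eval (fun q : Fin d × Fin n × Fin n => A q.1 q.2.1 q.2.2) p := rfl

lemma evalR_gen (A : Fin d → Matrix (Fin n) (Fin n) F) (i : Fin d) :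
    (evalR A).mapMatrix (gen F d n i) = A i := by
  ext a b
  simp [gen, evalR]

lemma mon_gen (A : Fin d → Matrix (Fin n) (Fin n) F) (k : Fin d → ℕ) (i j : Fin n) :
    evalR A (mon (gen F d n) k i j) = mon A k i j := by
  have h := mon_map (evalR A) (gen F d n) k
  have h2 : (fun i => (evalR A).mapMatrix (gen F d n i)) = A := funext (evalR_gen A)
  rw [h2] at h
  have := congrFun (congrFun (congrArg (fun M => (M : Matrix (Fin n) (Fin n) F)) h) i) j
  simpa [RingHom.mapMatrix_apply, Matrix.map_apply] using this


/-! ### existence of a nonzero minor for a linearly independent family -/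

lemma exists_minor_ne_zero {K : Type*} [Field K] {k : ℕ} {ι : Type*} [Fintype ι] [DecidableEq ι]
    [Nonempty ι] (w : Fin k → ι → K) (hw : LinearIndependent K w) :
    ∃ c : Fin k → ι, (Matrix.of fun a b => w a (c b)).det ≠ 0 := by
  classical
  set P := Submodule.span K (Set.range w) with hPdef
  have hP : Module.finrank K P = k := by
    rw [finrank_span_eq_card hw, Fintype.card_fin]
  let ε : ι → Module.Dual K P := fun q => (LinearMap.proj q).comp P.subtype
  have hsp : Submodule.span K (Set.range ε) = ⊤ := by
    rw [Submodule.eq_top_iff']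
    intro f
    obtain ⟨g, hg⟩ := LinearMap.dualMap_surjective_of_injective P.injective_subtype f
    have hgdec : ∀ x : ι → K, g x = ∑ q, x q • g (Pi.single q 1) := by
      intro x
      conv_lhs => rw [pi_eq_sum_univ x, map_sum]
      refine Finset.sum_congr rfl fun q _ => ?_
      rw [_root_.map_smul]
      congr 2
      funext j
      simp [Pi.single_apply, eq_comm]
    have hf : f = ∑ q, g (Pi.single q 1) • ε q := by
      ext p
      rw [← hg]
      simp only [LinearMap.dualMap_apply, LinearMap.sum_apply, LinearMap.smul_apply]
      rw [hgdec (P.subtype p)]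
      congr 1
      ext q
      rw [smul_eq_mul, smul_eq_mul, mul_comm]
      rfl
    rw [hf]
    exact Submodule.sum_mem _ fun q _ =>
      Submodule.smul_mem _ _ (Submodule.subset_span (Set.mem_range_self q))
  obtain ⟨b, hb_sub, hb_span, hb_li⟩ := exists_linearIndependent K (Set.range ε)
  rw [hsp] at hb_span
  haveI : FiniteDimensional K P := FiniteDimensional.finiteDimensional_submodule P
  have hb_fin : b.Finite := hb_li.finite
  haveI := hb_fin.fintype
  have hbc : Fintype.card b = k := by
    have h1 := finrank_span_set_eq_card hb_li
    rw [hb_span, finrank_top] at h1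
    rw [Subspace.dual_finrank_eq, hP] at h1
    rw [← Set.toFinset_card]
    exact h1.symm
  let e : Fin k ≃ b := (Fintype.equivFinOfCardEq hbc).symm
  have hchoice : ∀ a : Fin k, ∃ q : ι, ε q = ((e a : Module.Dual K P)) := by
    intro a
    obtain ⟨q, hq⟩ := hb_sub (e a).2
    exact ⟨q, hq⟩
  choose c hc using hchoice
  have hεc : (fun a => ε (c a)) = fun a => ((e a : Module.Dual K P)) := funext hc
  have hspan' : Submodule.span K (Set.range fun a => ε (c a)) = ⊤ := by
    rw [hεc]
    have : Set.range (fun a => ((e a : Module.Dual K P))) = b := by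
      rw [show (fun a => ((e a : Module.Dual K P))) = Subtype.val ∘ e from rfl,
        Set.range_comp, Equiv.range_eq_univ, Set.image_univ, Subtype.range_coe]
    rw [this, hb_span]
  let T : P →ₗ[K] (Fin k → K) := LinearMap.pi (fun a => ε (c a))
  have hT : LinearMap.ker T = ⊥ := by
    rw [LinearMap.ker_eq_bot']
    intro x hx
    have hall : ∀ f : Module.Dual K P, f x = 0 := by
      intro f
      have hfmem : f ∈ Submodule.span K (Set.range fun a => ε (c a)) := by
        rw [hspan']; trivial
      induction hfmem using Submodule.span_induction with
      | mem f hf =>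
        obtain ⟨a, rfl⟩ := hf
        have := congrFun hx a
        exact this
      | zero => simp
      | add f g _ _ hf hg => simp [hf, hg]
      | smul r f _ hf => simp [hf]
    exact (Module.forall_dual_apply_eq_zero_iff K x).mp hall
  let w' : Fin k → P := fun a => ⟨w a, Submodule.subset_span (Set.mem_range_self a)⟩
  have hw' : LinearIndependent K w' := by
    apply LinearIndependent.of_comp P.subtype
    exact hw
  have hrows : LinearIndependent K (T ∘ w') := hw'.map' T hT
  have hrows' : LinearIndependent K (fun a => (Matrix.of fun a b => w a (c b)) a) := by
    convert hrows using 1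
    rfl
  have hunit : IsUnit (Matrix.of fun a b => w a (c b)) :=
    Matrix.linearIndependent_rows_iff_isUnit.mp hrows'
  exact ⟨c, by
    intro h0
    exact (Matrix.isUnit_iff_isUnit_det _ |>.mp hunit).ne_zero h0⟩


/-! ### nilpotent matrices -/

lemma pow_card_eq_zero_of_isNilpotent {K : Type*} [Field K] {m : ℕ}
    {M : Matrix (Fin m) (Fin m) K} (h : IsNilpotent M) : M ^ m = 0 := by
  have h1 := Matrix.isNilpotent_charpoly_sub_pow_of_isNilpotent h
  have h2 : M.charpoly = Polynomial.X ^ (Fintype.card (Fin m)) := by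
    rw [← sub_eq_zero]
    exact h1.eq_zero
  have h3 := M.aeval_self_charpoly
  rw [h2, map_pow, Polynomial.aeval_X, Fintype.card_fin] at h3
  exact h3

/-! ### the Jordan block -/

def jb (K : Type*) [Field K] (m : ℕ) : Matrix (Fin m) (Fin m) K :=
  Matrix.of fun i j => if (i : ℕ) + 1 = (j : ℕ) then 1 else 0

lemma jb_pow (K : Type*) [Field K] (m t : ℕ) :
    (jb K m) ^ t = Matrix.of fun i j : Fin m => if (i : ℕ) + t = (j : ℕ) then 1 else 0 := by
  induction t with
  | zero =>
    ext i j
    simp only [pow_zero, Matrix.one_apply, Matrix.of_apply, Nat.add_zero]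
    by_cases h : i = j <;> simp [h, Fin.val_eq_val]
  | succ t ih =>
    ext i j
    rw [pow_succ, ih, Matrix.mul_apply]
    simp only [Matrix.of_apply, jb]
    by_cases hj : (i : ℕ) + (t + 1) = (j : ℕ)
    · have hl : (i : ℕ) + t < m := by omega
      rw [Finset.sum_eq_single (⟨(i : ℕ) + t, hl⟩ : Fin m)]
      · have h1 : ((⟨(i : ℕ) + t, hl⟩ : Fin m) : ℕ) = (i : ℕ) + t := rfl
        rw [h1, if_pos rfl, one_mul, if_pos (by omega : (i : ℕ) + t + 1 = (j : ℕ)), if_pos hj]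
      · intro l _ hne
        rw [if_neg, zero_mul]
        intro hli
        apply hne
        exact Fin.ext hli.symm
      · intro hmem
        exact absurd (Finset.mem_univ _) hmem
    · rw [if_neg hj]
      apply Finset.sum_eq_zero
      intro l _
      by_cases h1 : (i : ℕ) + t = (l : ℕ)
      · rw [if_pos h1, one_mul, if_neg (by omega)]
      · rw [if_neg h1, zero_mul]

lemma jb_pow_card (K : Type*) [Field K] (m : ℕ) : (jb K m) ^ m = 0 := by
  rw [jb_pow]
  ext i j
  simp only [Matrix.of_apply, Matrix.zero_apply]
  rw [if_neg (by omega)]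

lemma jb_isNilpotent (K : Type*) [Field K] (m : ℕ) : IsNilpotent (jb K m) :=
  ⟨m, jb_pow_card K m⟩

lemma jb_pow_pred_ne_zero (K : Type*) [Field K] (m : ℕ) (hm : 0 < m) :
    (jb K m) ^ (m - 1) ≠ 0 := by
  rw [jb_pow]
  intro h0
  have h1 := congrFun (congrFun (congrArg (fun M => (M : Matrix (Fin m) (Fin m) K)) h0)
    (⟨0, hm⟩ : Fin m)) (⟨m - 1, by omega⟩ : Fin m)
  simp only [Matrix.of_apply, Matrix.zero_apply] at h1
  rw [if_pos (by simp)] at h1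
  exact one_ne_zero h1

lemma mulVec_sum' {K : Type*} [Field K] {m : ℕ} {ι : Type*} [Fintype ι]
    (M : Matrix (Fin m) (Fin m) K) (f : ι → (Fin m → K)) :
    M *ᵥ (∑ t, f t) = ∑ t, M *ᵥ f t := by
  simpa only [Matrix.mulVecLin_apply] using map_sum M.mulVecLin f Finset.univ

lemma sum_mulVec' {K : Type*} [Field K] {m : ℕ} {ι : Type*} [Fintype ι]
    (f : ι → Matrix (Fin m) (Fin m) K) (v : Fin m → K) :
    (∑ t, f t) *ᵥ v = ∑ t, f t *ᵥ v := by
  ext i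
  simp [Matrix.mulVec, dotProduct, Matrix.sum_apply, Finset.sum_mul]
  rw [Finset.sum_comm]

/-! ### centralizer of a regular nilpotent matrix -/

lemma mem_span_pow_of_commute {K : Type*} [Field K] {m : ℕ} (hm : 0 < m)
    {J B : Matrix (Fin m) (Fin m) K}
    (hJm : J ^ m = 0) (hJ1 : J ^ (m - 1) ≠ 0) (hcomm : Commute J B) :
    B ∈ Submodule.span K (Set.range fun j : Fin m => J ^ (j : ℕ)) := by
  classical
  -- find v with J^(m-1) *ᵥ v ≠ 0
  obtain ⟨v, hv⟩ : ∃ v : Fin m → K, (J ^ (m - 1)) *ᵥ v ≠ 0 := by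
    by_contra hall
    push_neg at hall
    apply hJ1
    ext i j
    simpa [Matrix.mulVec_single] using congrFun (hall (Pi.single j 1)) i
  set e : Fin m → (Fin m → K) := fun t => (J ^ (t : ℕ)) *ᵥ v with he
  have hpow0 : ∀ t : ℕ, m ≤ t → J ^ t = 0 := fun t ht => pow_eq_zero_of_le ht hJm
  have hli : LinearIndependent K e := by
    rw [Fintype.linearIndependent_iff]
    intro c hc
    -- strong induction on index
    suffices hind : ∀ N : ℕ, ∀ t : Fin m, (t : ℕ) = N → c t = 0 by
      intro t; exact hind t t rfl
    intro N
    induction N using Nat.strong_induction_on with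
    | _ N ih =>
      intro t ht
      have htm : (t : ℕ) < m := t.isLt
      have happ := congrArg (fun x => (J ^ (m - 1 - N)) *ᵥ x) hc
      simp only [Matrix.mulVec_zero] at happ
      rw [mulVec_sum'] at happ
      have hterm : ∀ s : Fin m,
          (J ^ (m - 1 - N)) *ᵥ (c s • e s) = c s • ((J ^ (m - 1 - N + (s : ℕ))) *ᵥ v) := by
        intro s
        rw [Matrix.mulVec_smul, he]
        simp only []
        rw [Matrix.mulVec_mulVec, ← pow_add]
      simp only [hterm] at happ
      have hsingle : ∑ s : Fin m, c s • ((J ^ (m - 1 - N + (s : ℕ))) *ᵥ v)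
          = c t • ((J ^ (m - 1)) *ᵥ v) := by
        rw [Finset.sum_eq_single t]
        · have harith : m - 1 - N + (t : ℕ) = m - 1 := by omega
          rw [harith]
        · intro s _ hst
          have hsm : (s : ℕ) < m := s.isLt
          rcases lt_or_gt_of_ne (fun hval : (s : ℕ) = (t : ℕ) => hst (Fin.ext hval)) with hlt | hgt
          · rw [ih (s : ℕ) (by omega) s rfl, zero_smul]
          · rw [hpow0 _ (by omega), Matrix.zero_mulVec, smul_zero]
        · intro hmem
          exact absurd (Finset.mem_univ _) hmem
      rw [hsingle] at happ
      rcases smul_eq_zero.mp happ with h | h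
      · exact h
      · exact absurd h hv
  haveI : Nonempty (Fin m) := ⟨⟨0, hm⟩⟩
  have hcard : Fintype.card (Fin m) = Module.finrank K (Fin m → K) := by
    simp [Module.finrank_fin_fun]
  let bas := basisOfLinearIndependentOfCardEqFinrank hli hcard
  have hbas : ∀ t, bas t = e t := fun t =>
    congrFun (coe_basisOfLinearIndependentOfCardEqFinrank hli hcard) t
  set cf : Fin m → K := fun t => bas.repr (B *ᵥ v) t with hcf
  have hBv : B *ᵥ v = ∑ t : Fin m, cf t • ((J ^ (t : ℕ)) *ᵥ v) := by
    conv_lhs => rw [← bas.sum_repr (B *ᵥ v)]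
    refine Finset.sum_congr rfl fun t _ => ?_
    rw [hbas t]
  set C : Matrix (Fin m) (Fin m) K := ∑ t : Fin m, cf t • J ^ (t : ℕ) with hC
  have hBC : B = C := by
    have hlin : Matrix.toLin' B = Matrix.toLin' C := by
      apply bas.ext
      intro t
      rw [Matrix.toLin'_apply, Matrix.toLin'_apply, hbas t, he]
      simp only []
      rw [Matrix.mulVec_mulVec, (hcomm.symm.pow_right (t : ℕ)).eq, ← Matrix.mulVec_mulVec, hBv]
      rw [hC, sum_mulVec', mulVec_sum']
      refine Finset.sum_congr rfl fun s _ => ?_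
      rw [Matrix.mulVec_smul, Matrix.smul_mulVec]
      rw [Matrix.mulVec_mulVec, Matrix.mulVec_mulVec, ← pow_add, ← pow_add, add_comm]
    exact Matrix.toLin'.injective hlin
  rw [hBC, hC]
  exact Submodule.sum_mem _ fun t _ =>
    Submodule.smul_mem _ _ (Submodule.subset_span (Set.mem_range_self t))


/-! ### the monomial family and the "big algebra" locus -/

variable (F d n) in
/-- the family of monomials with exponents `< n` -/
noncomputable def monFam (A : Fin d → Matrix (Fin n) (Fin n) F) :
    (Fin d → Fin n) → Matrix (Fin n) (Fin n) F :=
  fun k => mon A (fun i => (k i : ℕ))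

variable (F d n) in
/-- the locus where the span of the monomials has dimension `> n` -/
noncomputable def U : Set (Fin d → Matrix (Fin n) (Fin n) F) :=
  {A | n < Module.finrank F (Submodule.span F (Set.range (monFam F d n A)))}

lemma mon_mem_span {A : Fin d → Matrix (Fin n) (Fin n) F}
    (hnil : ∀ i, A i ^ n = 0) (k : Fin d → ℕ) :
    mon A k ∈ Submodule.span F (Set.range (monFam F d n A)) := by
  by_cases hall : ∀ i, k i < n
  · refine Submodule.subset_span ⟨fun i => ⟨k i, hall i⟩, ?_⟩
    unfold monFam
    rfl
  · push_neg at hall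
    obtain ⟨i, hi⟩ := hall
    rw [mon_eq_zero A hi (hnil i)]
    exact Submodule.zero_mem _

lemma adjoin_le_span {A : Fin d → Matrix (Fin n) (Fin n) F} (hn : 0 < n)
    (hc : ∀ i j, Commute (A i) (A j)) (hnil : ∀ i, A i ^ n = 0) :
    Subalgebra.toSubmodule (Algebra.adjoin F (Set.range A)) ≤
      Submodule.span F (Set.range (monFam F d n A)) := by
  set P := Submodule.span F (Set.range (monFam F d n A)) with hP
  have hone : (1 : Matrix (Fin n) (Fin n) F) ∈ P := by
    have := mon_mem_span (F := F) hnil 0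
    rwa [mon_zero] at this
  have hmul : ∀ x y : Matrix (Fin n) (Fin n) F, x ∈ P → y ∈ P → x * y ∈ P := by
    have hle : P * P ≤ P := by
      rw [hP, Submodule.span_mul_span]
      rw [Submodule.span_le]
      rintro z hz
      rw [Set.mem_mul] at hz
      obtain ⟨x, ⟨a, rfl⟩, y, ⟨b, rfl⟩, rfl⟩ := hz
      unfold monFam
      rw [mon_mul hc]
      exact mon_mem_span hnil _
    intro x y hx hy
    exact hle (Submodule.mul_mem_mul hx hy)
  have hadj : Algebra.adjoin F (Set.range A) ≤ P.toSubalgebra hone hmul := by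
    apply Algebra.adjoin_le
    rintro _ ⟨i, rfl⟩
    show A i ∈ P
    have := mon_mem_span (F := F) hnil (Pi.single i 1)
    rwa [mon_single, pow_one] at this
  exact fun x hx => hadj hx

/-- on the locus where `A i0` is regular nilpotent, the span of monomials is small -/
lemma finrank_le_of_reg {A : Fin d → Matrix (Fin n) (Fin n) F} (hn : 0 < n)
    (hc : ∀ i j, Commute (A i) (A j)) (hnil : ∀ i, A i ^ n = 0) (i0 : Fin d)
    (hreg : (A i0) ^ (n - 1) ≠ 0) :
    Module.finrank F (Submodule.span F (Set.range (monFam F d n A))) ≤ n := by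
  classical
  set P := Submodule.span F (Set.range fun j : Fin n => (A i0) ^ (j : ℕ)) with hP
  have hone : (1 : Matrix (Fin n) (Fin n) F) ∈ P :=
    Submodule.subset_span ⟨⟨0, hn⟩, by simp⟩
  have hmul : ∀ x y : Matrix (Fin n) (Fin n) F, x ∈ P → y ∈ P → x * y ∈ P := by
    have hle : P * P ≤ P := by
      rw [hP, Submodule.span_mul_span, Submodule.span_le]
      rintro z hz
      rw [Set.mem_mul] at hz
      obtain ⟨x, ⟨a, rfl⟩, y, ⟨b, rfl⟩, rfl⟩ := hz
      rw [← pow_add]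
      by_cases hab : (a : ℕ) + (b : ℕ) < n
      · exact Submodule.subset_span ⟨⟨(a : ℕ) + (b : ℕ), hab⟩, rfl⟩
      · rw [pow_eq_zero_of_le (le_of_not_gt hab) (hnil i0)]
        exact Submodule.zero_mem _
    intro x y hx hy
    exact hle (Submodule.mul_mem_mul hx hy)
  set PA := P.toSubalgebra hone hmul with hPA
  have hmem : ∀ i, A i ∈ PA := fun i =>
    mem_span_pow_of_commute hn (hnil i0) hreg (hc i0 i)
  have hfam : ∀ k : Fin d → Fin n, monFam F d n A k ∈ PA := by
    intro k
    apply Subalgebra.list_prod_mem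
    intro x hx
    obtain ⟨i, _, rfl⟩ := List.mem_map.mp hx
    exact pow_mem (hmem i) _
  have hle2 : Submodule.span F (Set.range (monFam F d n A)) ≤ P := by
    rw [Submodule.span_le]
    rintro _ ⟨k, rfl⟩
    exact hfam k
  refine le_trans (Submodule.finrank_mono hle2) ?_
  refine le_trans (finrank_span_le_card _) ?_
  rw [Set.toFinset_card]
  exact le_trans (Fintype.card_range_le _) (by simp)

/-! ### the characterization of membership in `U` by minors -/

/-- coordinates of a matrix as a function on pairs -/
def coords : Matrix (Fin n) (Fin n) F →ₗ[F] (Fin n × Fin n → F) where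
  toFun M := fun q => M q.1 q.2
  map_add' _ _ := rfl
  map_smul' _ _ := rfl

lemma mem_U_iff (hn : 0 < n) (A : Fin d → Matrix (Fin n) (Fin n) F) :
    A ∈ U F d n ↔
    ∃ (s : Fin (n + 1) → (Fin d → Fin n)) (c : Fin (n + 1) → Fin n × Fin n),
      (Matrix.of fun a b => monFam F d n A (s a) (c b).1 (c b).2).det ≠ 0 := by
  classical
  constructor
  · intro hA
    have hA' : n + 1 ≤ Module.finrank F (Submodule.span F (Set.range (monFam F d n A))) := hA
    obtain ⟨b, hsub, hspan, hli⟩ := exists_linearIndependent F (Set.range (monFam F d n A))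
    have hb_fin : b.Finite := hli.finite
    haveI := hb_fin.fintype
    have hcard : n + 1 ≤ Fintype.card b := by
      have h1 := finrank_span_set_eq_card hli
      rw [hspan] at h1
      rw [← Set.toFinset_card, ← h1]
      exact hA'
    obtain ⟨g⟩ : Nonempty (Fin (n + 1) ↪ b) :=
      Function.Embedding.nonempty_of_card_le (by simpa using hcard)
    have hf_li : LinearIndependent F (fun a : Fin (n + 1) => ((g a : b) : Matrix (Fin n) (Fin n) F)) :=
      hli.comp g g.injective
    have hchoice : ∀ a : Fin (n + 1), ∃ k, monFam F d n A k = ((g a : b) : Matrix (Fin n) (Fin n) F) :=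
      fun a => hsub (g a).2
    choose s hs using hchoice
    have hmon_li : LinearIndependent F (fun a : Fin (n + 1) => monFam F d n A (s a)) := by
      have heq : (fun a : Fin (n + 1) => monFam F d n A (s a)) =
          fun a => ((g a : b) : Matrix (Fin n) (Fin n) F) := funext hs
      rw [heq]
      exact hf_li
    have hker : LinearMap.ker (coords (F := F) (n := n)) = ⊥ := by
      rw [LinearMap.ker_eq_bot']
      intro M hM
      ext i j
      exact congrFun hM (i, j)
    have hw_li : LinearIndependent F
        (fun a : Fin (n + 1) => coords (F := F) (monFam F d n A (s a))) :=
      hmon_li.map' _ hker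
    haveI : Nonempty (Fin n × Fin n) := ⟨(⟨0, hn⟩, ⟨0, hn⟩)⟩
    obtain ⟨c, hc⟩ := exists_minor_ne_zero _ hw_li
    exact ⟨s, c, hc⟩
  · rintro ⟨s, c, hdet⟩
    have hunit : IsUnit (Matrix.of fun a b => monFam F d n A (s a) (c b).1 (c b).2) :=
      (Matrix.isUnit_iff_isUnit_det _).mpr (isUnit_iff_ne_zero.mpr hdet)
    have hrows := Matrix.linearIndependent_rows_iff_isUnit.mpr hunit
    let L : Matrix (Fin n) (Fin n) F →ₗ[F] (Fin (n + 1) → F) :=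
      LinearMap.pi fun b => {
        toFun := fun M => M (c b).1 (c b).2
        map_add' := fun _ _ => rfl
        map_smul' := fun _ _ => rfl }
    have hli : LinearIndependent F (fun a : Fin (n + 1) => monFam F d n A (s a)) := by
      apply LinearIndependent.of_comp L
      exact hrows
    have h1 : Module.finrank F
        (Submodule.span F (Set.range fun a : Fin (n + 1) => monFam F d n A (s a))) = n + 1 := by
      rw [finrank_span_eq_card hli, Fintype.card_fin]
    have h2 : Submodule.span F (Set.range fun a : Fin (n + 1) => monFam F d n A (s a)) ≤
        Submodule.span F (Set.range (monFam F d n A)) := by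
      apply Submodule.span_mono
      rintro _ ⟨a, rfl⟩
      exact ⟨s a, rfl⟩
    have := Submodule.finrank_mono h2
    rw [h1] at this
    exact lt_of_lt_of_le (Nat.lt_succ_self n) this

/-! ### topology -/

lemma isOpen_poly_ne (p : MvPolynomial (Fin d × Fin n × Fin n) F) :
    IsOpen {A : Fin d → Matrix (Fin n) (Fin n) F | evalR A p ≠ 0} :=
  TopologicalSpace.isOpen_generateFrom_of_mem ⟨p, rfl⟩

lemma isOpen_U (hn : 0 < n) : IsOpen (U F d n) := by
  classical
  have hUeq : U F d n = ⋃ (s : Fin (n + 1) → (Fin d → Fin n)) (c : Fin (n + 1) → Fin n × Fin n),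
      {A | evalR A (Matrix.of fun a b =>
        mon (gen F d n) (fun i => ((s a) i : ℕ)) (c b).1 (c b).2).det ≠ 0} := by
    ext A
    rw [Set.mem_iUnion]
    simp only [Set.mem_iUnion, Set.mem_setOf_eq]
    rw [mem_U_iff hn]
    constructor
    · rintro ⟨s, c, hdet⟩
      refine ⟨s, c, ?_⟩
      rw [RingHom.map_det]
      convert hdet using 2
      ext a b
      simp only [Matrix.map_apply, Matrix.of_apply]
      exact mon_gen A _ _ _
    · rintro ⟨s, c, hdet⟩
      refine ⟨s, c, ?_⟩
      rw [RingHom.map_det] at hdet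
      convert hdet using 2
      ext a b
      simp only [Matrix.map_apply, Matrix.of_apply]
      exact (mon_gen A _ _ _).symm
  rw [hUeq]
  exact isOpen_iUnion fun s => isOpen_iUnion fun c => isOpen_poly_ne _

variable (F d n) in
/-- the locus where `A i0` is a regular nilpotent candidate -/
def Wset (i0 : Fin d) : Set (Fin d → Matrix (Fin n) (Fin n) F) :=
  {A | (A i0) ^ (n - 1) ≠ 0}

lemma isOpen_W (i0 : Fin d) : IsOpen (Wset F d n i0) := by
  classical
  have hWeq : Wset F d n i0 = ⋃ (i : Fin n) (j : Fin n),
      {A | evalR A (mon (gen F d n) (Pi.single i0 (n - 1)) i j) ≠ 0} := by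
    ext A
    simp only [Wset, Set.mem_iUnion, Set.mem_setOf_eq]
    constructor
    · intro hne
      by_contra hforall
      push_neg at hforall
      apply hne
      ext i j
      have := hforall i j
      rw [mon_gen A _ i j, mon_single] at this
      simpa using this
    · rintro ⟨i, j, hij⟩ h0
      rw [mon_gen A _ i j, mon_single, h0] at hij
      simp at hij
  rw [hWeq]
  exact isOpen_iUnion fun i => isOpen_iUnion fun j => isOpen_poly_ne _

lemma witness_mem (hd : 0 < d) (hn : 0 < n) :
    ∃ A : Fin d → Matrix (Fin n) (Fin n) F,
      A ∈ NilTuples F d n ∧ A ∈ Wset F d n ⟨0, hd⟩ := by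
  classical
  set i0 : Fin d := ⟨0, hd⟩
  refine ⟨fun i => if i = i0 then jb F n else 0, ⟨?_, ?_⟩, ?_⟩
  · intro i j
    by_cases hi : i = i0 <;> by_cases hj : j = i0 <;> simp [hi, hj, Commute.refl]
  · intro i
    by_cases hi : i = i0 <;> simp [hi, jb_isNilpotent]
  · show (if i0 = i0 then jb F n else 0) ^ (n - 1) ≠ 0
    rw [if_pos rfl]
    exact jb_pow_pred_ne_zero F n hn

end Stmt6Aux

theorem statement6 (F : Type*) [Field F] [IsAlgClosed F] (d n : ℕ) (hd : 0 < d) (hn : 0 < n)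
    (h : IsIrreducible (NilTuples F d n)) :
    ∀ A : Fin d → Matrix (Fin n) (Fin n) F,
      (∀ i j, Commute (A i) (A j)) → (∀ i, IsNilpotent (A i)) →
      Module.finrank F (Algebra.adjoin F (Set.range A)) ≤ n := by
  classical
  intro A hcomm hnil
  open Stmt6Aux in
  have hnil' : ∀ i, A i ^ n = 0 := fun i => pow_card_eq_zero_of_isNilpotent (hnil i)
  have hfin : Module.finrank F (Submodule.span F (Set.range (Stmt6Aux.monFam F d n A))) ≤ n := by
    by_contra hgt
    push_neg at hgt
    have hAU : A ∈ Stmt6Aux.U F d n := hgt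
    obtain ⟨Astar, hAstarN, hAstarW⟩ := Stmt6Aux.witness_mem (F := F) hd hn
    have hUne : (NilTuples F d n ∩ Stmt6Aux.U F d n).Nonempty :=
      ⟨A, ⟨hcomm, hnil⟩, hAU⟩
    have hWne : (NilTuples F d n ∩ Stmt6Aux.Wset F d n ⟨0, hd⟩).Nonempty :=
      ⟨Astar, hAstarN, hAstarW⟩
    obtain ⟨B, hBN, hBU, hBW⟩ :=
      h.isPreirreducible _ _ (Stmt6Aux.isOpen_U hn) (Stmt6Aux.isOpen_W ⟨0, hd⟩) hUne hWne
    have hBnil' : ∀ i, B i ^ n = 0 := fun i =>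
      Stmt6Aux.pow_card_eq_zero_of_isNilpotent (hBN.2 i)
    exact absurd (Stmt6Aux.finrank_le_of_reg hn hBN.1 hBnil' ⟨0, hd⟩ hBW) (not_le.mpr hBU)
  have hle := Submodule.finrank_mono (Stmt6Aux.adjoin_le_span hn hcomm hnil')
  rw [Subalgebra.finrank_toSubmodule] at hle
  exact le_trans hle hfin
end

section
/- Let F be an algebraically closed field and let A be the 6×6 matrix over F with entries A_{12} = A_{23} = A_{45} = 1 and all other entries 0 (the Jordan form with nilpotent blocks of sizes 3, 2 and 1). Then A is a 3-regular nilpotent matrix, and the variety N_2(A) of pairs of commuting nilpotent matrices in the centralizer of A is reducible (i.e., not irreducible). -/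
/-- The Zariski topology on the space of pairs of `6 × 6` matrices over `F`. -/
instance pairZariskiTop (F : Type*) [Field F] (n : ℕ) :
    TopologicalSpace (Matrix (Fin n) (Fin n) F × Matrix (Fin n) (Fin n) F) :=
  TopologicalSpace.generateFrom
    { U | ∃ p : MvPolynomial ((Fin n × Fin n) ⊕ (Fin n × Fin n)) F,
        U = {P | MvPolynomial.eval
              (Sum.elim (fun q => P.1 q.1 q.2) (fun q => P.2 q.1 q.2)) p ≠ 0} }

/-- `N_2(A)`: the set of pairs of commuting nilpotent matrices in the centralizer of `A`. -/
def Nil2Cent {F : Type*} [Field F] {n : ℕ} (A : Matrix (Fin n) (Fin n) F) :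
    Set (Matrix (Fin n) (Fin n) F × Matrix (Fin n) (Fin n) F) :=
  {P | P.1 * A = A * P.1 ∧ P.2 * A = A * P.2 ∧ P.1 * P.2 = P.2 * P.1 ∧
    IsNilpotent P.1 ∧ IsNilpotent P.2}

theorem zfv0 : ((0:Fin 6):ℕ) = 0 := rfl
theorem zfv1 : ((1:Fin 6):ℕ) = 1 := rfl
theorem zfv2 : ((2:Fin 6):ℕ) = 2 := rfl
theorem zfv3 : ((3:Fin 6):ℕ) = 3 := rfl
theorem zfv4 : ((4:Fin 6):ℕ) = 4 := rfl
theorem zfv5 : ((5:Fin 6):ℕ) = 5 := rfl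

/-- For a matrix in the centralizer of `A` (in the coordinate form we use),
nilpotency forces the `(0,0)` and `(5,5)` entries to vanish. -/
theorem nilDiag {F : Type*} [Field F] (B : Matrix (Fin 6) (Fin 6) F)
    (h10 : B 1 0 = 0) (h20 : B 2 0 = 0) (h30 : B 3 0 = 0) (h40 : B 4 0 = 0) (h50 : B 5 0 = 0)
    (h21 : B 2 1 = 0) (h41 : B 4 1 = 0) (h51 : B 5 1 = 0)
    (h13 : B 1 3 = 0) (h23 : B 2 3 = 0) (h43 : B 4 3 = 0) (h53 : B 5 3 = 0)
    (h15 : B 1 5 = 0) (h25 : B 2 5 = 0) (h45 : B 4 5 = 0)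
    (hn : IsNilpotent B) : B 0 0 = 0 ∧ B 5 5 = 0 := by
  obtain ⟨n, hn⟩ := hn
  rcases n with _ | n
  · exfalso
    have := congrFun (congrFun hn 0) 0
    simp [Matrix.one_apply] at this
  have k1 : ∀ k, (B ^ k) 0 0 = (B 0 0) ^ k := by
    intro k
    induction k with
    | zero => simp
    | succ k ih =>
      rw [pow_succ, pow_succ]
      have : (B ^ k * B) 0 0 = (B ^ k) 0 0 * B 0 0 := by
        simp [Matrix.mul_apply, Fin.sum_univ_six, h10, h20, h30, h40, h50]
      rw [this, ih]
  have k2 : ∀ k, (B ^ k) 5 0 = 0 ∧ (B ^ k) 5 1 = 0 ∧ (B ^ k) 5 3 = 0 ∧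
      (B ^ k) 5 5 = (B 5 5) ^ k := by
    intro k
    induction k with
    | zero => simp [Matrix.one_apply]
    | succ k ih =>
      obtain ⟨i0, i1, i3, i5⟩ := ih
      refine ⟨?_, ?_, ?_, ?_⟩ <;> rw [pow_succ] <;>
        simp [Matrix.mul_apply, Fin.sum_univ_six, h10, h20, h30, h40, h50, h21, h41, h51,
          h13, h23, h43, h53, h15, h25, h45, i0, i1, i3, i5, pow_succ]
  constructor
  · have := k1 (n + 1)
    rw [hn] at this
    simp at this
    exact pow_eq_zero_iff (Nat.succ_ne_zero n) |>.mp this.symm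
  · have := (k2 (n + 1)).2.2.2
    rw [hn] at this
    simp at this
    exact pow_eq_zero_iff (Nat.succ_ne_zero n) |>.mp this.symm

/-- Entry relations satisfied by any matrix commuting with the Jordan matrix of type (3,2,1). -/
theorem centRels {F : Type*} [Field F] (B : Matrix (Fin 6) (Fin 6) F)
    (hBA : B * (Matrix.of fun i j : Fin 6 =>
        if ((i : ℕ) = 0 ∧ (j : ℕ) = 1) ∨ ((i : ℕ) = 1 ∧ (j : ℕ) = 2) ∨
            ((i : ℕ) = 3 ∧ (j : ℕ) = 4) then (1:F) else 0)
      = (Matrix.of fun i j : Fin 6 =>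
        if ((i : ℕ) = 0 ∧ (j : ℕ) = 1) ∨ ((i : ℕ) = 1 ∧ (j : ℕ) = 2) ∨
            ((i : ℕ) = 3 ∧ (j : ℕ) = 4) then (1:F) else 0) * B) :
    B 1 0 = 0 ∧ B 2 0 = 0 ∧ B 3 0 = 0 ∧ B 4 0 = 0 ∧ B 5 0 = 0 ∧
    B 2 1 = 0 ∧ B 4 1 = 0 ∧ B 5 1 = 0 ∧
    B 1 3 = 0 ∧ B 2 3 = 0 ∧ B 4 3 = 0 ∧ B 5 3 = 0 ∧
    B 1 5 = 0 ∧ B 2 5 = 0 ∧ B 4 5 = 0 ∧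
    B 0 0 = B 1 1 ∧ B 1 1 = B 2 2 ∧ B 0 3 = B 1 4 := by
  have h := fun i j => Matrix.ext_iff.mpr hBA i j
  have e00 := h 0 0; have e10 := h 1 0
  have e01 := h 0 1; have e31 := h 3 1; have e41 := h 4 1; have e51 := h 5 1
  have e12 := h 1 2; have e22 := h 2 2; have e42 := h 4 2; have e52 := h 5 2
  have e03 := h 0 3; have e13 := h 1 3; have e33 := h 3 3
  have e04 := h 0 4; have e54 := h 5 4
  have e05 := h 0 5; have e15 := h 1 5; have e35 := h 3 5
  simp [Matrix.mul_apply, Fin.sum_univ_six, Matrix.of_apply,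
    zfv0, zfv1, zfv2, zfv3, zfv4, zfv5] at e00 e10 e01 e31 e41 e51 e12 e22 e42 e52 e03 e13 e33 e04 e54 e05 e15 e35
  exact ⟨e00.symm, e10.symm, e31.trans e42, e41, e51, e22, e42, e52, e03.symm,
    e13.symm, e33.symm, e54, e05.symm, e15.symm, e35.symm, e01, e12, e04⟩

section Witnesses
variable (F : Type*) [Field F]

/-- The Jordan matrix of type (3,2,1). -/
def jordA : Matrix (Fin 6) (Fin 6) F := Matrix.of fun i j : Fin 6 =>
  if ((i : ℕ) = 0 ∧ (j : ℕ) = 1) ∨ ((i : ℕ) = 1 ∧ (j : ℕ) = 2) ∨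
      ((i : ℕ) = 3 ∧ (j : ℕ) = 4) then 1 else 0

def witW2B : Matrix (Fin 6) (Fin 6) F := Matrix.of fun i j : Fin 6 =>
  if ((i : ℕ) = 0 ∧ (j : ℕ) = 3) ∨ ((i : ℕ) = 1 ∧ (j : ℕ) = 4) then 1 else 0

def witW1B : Matrix (Fin 6) (Fin 6) F := Matrix.of fun i j : Fin 6 =>
  if ((i : ℕ) = 3 ∧ (j : ℕ) = 1) ∨ ((i : ℕ) = 4 ∧ (j : ℕ) = 2) then 1 else 0

def witW1C : Matrix (Fin 6) (Fin 6) F := Matrix.of fun i j : Fin 6 =>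
  if ((i : ℕ) = 3 ∧ (j : ℕ) = 5) then 1 else 0

set_option maxHeartbeats 1000000 in
theorem witW2B_mem : ((witW2B F, (0 : Matrix (Fin 6) (Fin 6) F))) ∈ Nil2Cent (jordA F) := by
  refine ⟨?_, by simp, by simp, ⟨2, ?_⟩, ⟨2, by rw [pow_two]; simp⟩⟩
  · ext i j
    fin_cases i <;> fin_cases j <;>
      norm_num [witW2B, jordA, Matrix.mul_apply, Fin.sum_univ_six,
        zfv0, zfv1, zfv2, zfv3, zfv4, zfv5]
  · rw [pow_two]
    ext i j
    fin_cases i <;> fin_cases j <;>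
      norm_num [witW2B, Matrix.mul_apply, Fin.sum_univ_six,
        zfv0, zfv1, zfv2, zfv3, zfv4, zfv5]

set_option maxHeartbeats 2000000 in
theorem witW1_mem : ((witW1B F, witW1C F)) ∈ Nil2Cent (jordA F) := by
  refine ⟨?_, ?_, ?_, ⟨2, ?_⟩, ⟨2, ?_⟩⟩ <;>
    [skip; skip; skip; rw [pow_two]; rw [pow_two]] <;>
    ext i j <;>
    fin_cases i <;> fin_cases j <;>
      norm_num [witW1B, witW1C, jordA, Matrix.mul_apply, Fin.sum_univ_six,
        zfv0, zfv1, zfv2, zfv3, zfv4, zfv5]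

end Witnesses

set_option maxHeartbeats 1000000 in
theorem statement14 (F : Type*) [Field F] [IsAlgClosed F]
    (A : Matrix (Fin 6) (Fin 6) F)
    (hA : A = Matrix.of fun i j : Fin 6 =>
      if ((i : ℕ) = 0 ∧ (j : ℕ) = 1) ∨ ((i : ℕ) = 1 ∧ (j : ℕ) = 2) ∨
          ((i : ℕ) = 3 ∧ (j : ℕ) = 4) then 1 else 0) :
    IsNilpotent A ∧
    (∀ μ : F,
      Module.finrank F
        (LinearMap.ker (A - μ • (1 : Matrix (Fin 6) (Fin 6) F)).mulVecLin) ≤ 3) ∧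
    ¬ IsIrreducible (Nil2Cent A) := by
  have hAj : A = jordA F := hA
  subst hAj
  refine ⟨?_, ?_, ?_⟩
  · -- nilpotency of A
    refine ⟨3, ?_⟩
    rw [pow_succ, pow_two]
    ext i j
    fin_cases i <;> fin_cases j <;>
      norm_num [jordA, Matrix.mul_apply, Fin.sum_univ_six, zfv0, zfv1, zfv2, zfv3, zfv4, zfv5] <;> decide
  · -- eigenspaces have dimension at most 3
    intro μ
    set M := jordA F - μ • 1 with hM
    have key : ∀ v : Fin 6 → F, M.mulVecLin v = 0 → v 0 = 0 → v 3 = 0 → v 5 = 0 → v = 0 := by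
      intro v hv h0 h3 h5
      have c0 := congrFun hv 0
      have c1 := congrFun hv 1
      have c3 := congrFun hv 3
      simp [hM, jordA, Matrix.mulVecLin_apply, Matrix.mulVec, dotProduct, Fin.sum_univ_six,
        Matrix.sub_apply, Matrix.smul_apply, Matrix.one_apply,
        zfv0, zfv1, zfv2, zfv3, zfv4, zfv5] at c0 c1 c3
      have h1 : v 1 = 0 := by rw [h0] at c0; linear_combination c0
      have h2 : v 2 = 0 := by rw [h1] at c1; linear_combination c1
      have h4 : v 4 = 0 := by rw [h3] at c3; linear_combination c3
      funext i
      fin_cases i <;> assumption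
    let f : (LinearMap.ker M.mulVecLin) →ₗ[F] (Fin 3 → F) :=
      (LinearMap.funLeft F F ![0,3,5]).comp (LinearMap.ker M.mulVecLin).subtype
    have hinj : Function.Injective f := by
      intro x y hxy
      have hd : M.mulVecLin ((x : Fin 6 → F) - y) = 0 := by
        rw [map_sub, LinearMap.mem_ker.mp x.2, LinearMap.mem_ker.mp y.2, sub_zero]
      have e0 := congrFun hxy 0
      have e3 := congrFun hxy 1
      have e5 := congrFun hxy 2
      simp [f, LinearMap.funLeft] at e0 e3 e5
      have := key ((x : Fin 6 → F) - y) hd (by simp [e0]) (by simp [e3]) (by simp [e5])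
      exact Subtype.ext (sub_eq_zero.mp this)
    calc Module.finrank F (LinearMap.ker M.mulVecLin)
        ≤ Module.finrank F (Fin 3 → F) := LinearMap.finrank_le_finrank_of_injective hinj
      _ = 3 := by simp
  · -- N₂(A) is reducible
    intro hirr
    obtain ⟨-, hpre⟩ := hirr
    set U1 : Set (Matrix (Fin 6) (Fin 6) F × Matrix (Fin 6) (Fin 6) F) :=
      {P | MvPolynomial.eval (Sum.elim (fun q => P.1 q.1 q.2) (fun q => P.2 q.1 q.2))
        (MvPolynomial.X (Sum.inl (0, 3)) :
          MvPolynomial ((Fin 6 × Fin 6) ⊕ (Fin 6 × Fin 6)) F) ≠ 0} with hU1def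
    set U2 : Set (Matrix (Fin 6) (Fin 6) F × Matrix (Fin 6) (Fin 6) F) :=
      {P | MvPolynomial.eval (Sum.elim (fun q => P.1 q.1 q.2) (fun q => P.2 q.1 q.2))
        (MvPolynomial.X (Sum.inl (4,2)) * MvPolynomial.X (Sum.inr (3,5)) -
          MvPolynomial.X (Sum.inr (4,2)) * MvPolynomial.X (Sum.inl (3,5)) :
          MvPolynomial ((Fin 6 × Fin 6) ⊕ (Fin 6 × Fin 6)) F) ≠ 0} with hU2def
    have hU1open : IsOpen U1 :=
      TopologicalSpace.isOpen_generateFrom_of_mem ⟨_, hU1def⟩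
    have hU2open : IsOpen U2 :=
      TopologicalSpace.isOpen_generateFrom_of_mem ⟨_, hU2def⟩
    have hne1 : (Nil2Cent (jordA F) ∩ U1).Nonempty := by
      refine ⟨(witW2B F, 0), witW2B_mem F, ?_⟩
      simp only [hU1def, Set.mem_setOf_eq, MvPolynomial.eval_X, Sum.elim_inl]
      norm_num [witW2B, zfv0, zfv3]
    have hne2 : (Nil2Cent (jordA F) ∩ U2).Nonempty := by
      refine ⟨(witW1B F, witW1C F), witW1_mem F, ?_⟩
      simp only [hU2def, Set.mem_setOf_eq, map_sub, map_mul, MvPolynomial.eval_X,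
        Sum.elim_inl, Sum.elim_inr]
      norm_num [witW1B, witW1C, zfv1, zfv2, zfv3, zfv4, zfv5]
    obtain ⟨⟨B, C⟩, hS, hx1, hx2⟩ := hpre U1 U2 hU1open hU2open hne1 hne2
    obtain ⟨hBA, hCA, hBC, hBn, hCn⟩ := hS
    simp only [hU1def, Set.mem_setOf_eq, MvPolynomial.eval_X, Sum.elim_inl] at hx1
    simp only [hU2def, Set.mem_setOf_eq, map_sub, map_mul, MvPolynomial.eval_X,
      Sum.elim_inl, Sum.elim_inr] at hx2
    obtain ⟨b10, b20, b30, b40, b50, b21, b41, b51, b13, b23, b43, b53, b15, b25, b45,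
      b0011, b1122, b0314⟩ := centRels B hBA
    obtain ⟨c10, c20, c30, c40, c50, c21, c41, c51, c13, c23, c43, c53, c15, c25, c45,
      c0011, c1122, c0314⟩ := centRels C hCA
    obtain ⟨b00, b55⟩ := nilDiag B b10 b20 b30 b40 b50 b21 b41 b51 b13 b23 b43 b53 b15 b25 b45 hBn
    obtain ⟨c00, c55⟩ := nilDiag C c10 c20 c30 c40 c50 c21 c41 c51 c13 c23 c43 c53 c15 c25 c45 hCn
    have e2 := Matrix.ext_iff.mpr hBC 1 2
    have e8 := Matrix.ext_iff.mpr hBC 0 5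
    simp only [Matrix.mul_apply, Fin.sum_univ_six] at e2 e8
    have key : B 0 3 * (B 4 2 * C 3 5 - C 4 2 * B 3 5) = 0 := by
      linear_combination (B 4 2) * e8 - (B 3 5) * e2
        + B 4 2 * (- C 0 5 * b00 - B 0 1 * c15 - B 0 2 * c25 - B 0 4 * c45 - B 0 5 * c55
            + B 0 5 * c00 + C 0 1 * b15 + C 0 2 * b25 + C 0 4 * b45 + C 0 5 * b55)
        - B 3 5 * (C 4 2 * b0314 - B 4 2 * c0314 - C 0 2 * b10 - C 3 2 * b13 - C 5 2 * b15
            + B 0 2 * c10 + B 3 2 * c13 + B 5 2 * c15 - C 1 2 * b1122 + B 1 2 * c1122)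
    rcases mul_eq_zero.mp key with h | h
    · exact hx1 h
    · exact hx2 h
end

section
/- Let F be an algebraically closed field, l a positive integer, m ≥ 2 an integer, and let W ∈ M_l(F) and V be an l×m matrix over F. Define the (2l+m)×(2l+m) block matrices A = [[0, I, 0], [0, 0, 0], [0, 0, 0]] and B = [[0, W, V], [0, 0, 0], [0, 0, 0]], where the first two block rows and columns have size l and the last has size m. Then there exists a nonzero nilpotent matrix of the block form N = [[N_1, 0, 0], [0, N_1, 0], [0, N_2, N_3]] (with N_1 ∈ M_l(F), N_2 an m×l matrix, N_3 ∈ M_m(F)) that commutes with both A and B. -/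
open Matrix

section Helpers

variable {F : Type*} [Field F]

private lemma matrix_eq_of_mulVec {p q : ℕ} {A B : Matrix (Fin p) (Fin q) F}
    (h : ∀ v, A *ᵥ v = B *ᵥ v) : A = B := by
  ext i j
  have := congrFun (h (Pi.single j 1)) i
  simpa [Matrix.mulVec_single] using this

private noncomputable def basisMat {n k : ℕ} (K : Submodule F (Fin n → F))
    (b : Module.Basis (Fin k) F K) : Matrix (Fin n) (Fin k) F :=
  Matrix.of fun i c => (b c : Fin n → F) i

private lemma basisMat_mulVec {n k : ℕ} (K : Submodule F (Fin n → F))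
    (b : Module.Basis (Fin k) F K) (x : Fin k → F) :
    basisMat K b *ᵥ x = ((b.equivFun.symm x : K) : Fin n → F) := by
  funext i
  rw [Module.Basis.equivFun_symm_apply]
  have : ((↑(∑ c, x c • b c) : Fin n → F)) = ∑ c, x c • (b c : Fin n → F) := by
    push_cast [Submodule.coe_sum]
    rfl
  rw [this]
  simp [basisMat, Matrix.mulVec, dotProduct, Finset.sum_apply, mul_comm]

private lemma basisMat_injective {n k : ℕ} (K : Submodule F (Fin n → F))
    (b : Module.Basis (Fin k) F K) : Function.Injective (basisMat K b).mulVecLin := by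
  intro x y hxy
  simp only [Matrix.mulVecLin_apply, basisMat_mulVec] at hxy
  have := Subtype.coe_injective hxy
  exact b.equivFun.symm.injective this

private lemma basisMat_mulVec_mem {n k : ℕ} (K : Submodule F (Fin n → F))
    (b : Module.Basis (Fin k) F K) (x : Fin k → F) : basisMat K b *ᵥ x ∈ K := by
  rw [basisMat_mulVec]; exact (b.equivFun.symm x).2

private lemma exists_basisMat_mulVec {n k : ℕ} (K : Submodule F (Fin n → F))
    (b : Module.Basis (Fin k) F K) (v : Fin n → F) (hv : v ∈ K) :
    ∃ x, basisMat K b *ᵥ x = v := by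
  refine ⟨b.equivFun ⟨v, hv⟩, ?_⟩
  rw [basisMat_mulVec, LinearEquiv.symm_apply_apply]

private lemma basisMat_col {n k : ℕ} (K : Submodule F (Fin n → F))
    (b : Module.Basis (Fin k) F K) (c : Fin k) :
    (fun i => basisMat K b i c) = (b c : Fin n → F) := rfl

private lemma col_mul {p q r : ℕ} (A : Matrix (Fin p) (Fin q) F) (B : Matrix (Fin q) (Fin r) F)
    (j : Fin r) : (fun i => (A * B) i j) = A *ᵥ (fun i => B i j) := by
  funext i
  simp [Matrix.mul_apply, Matrix.mulVec, dotProduct]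

end Helpers

private lemma key_lemma {F : Type*} [Field F] (a : ℕ) : ∀ (b : ℕ), a + 2 ≤ b →
    ∀ (J X : Matrix (Fin b) (Fin a) F), Function.Injective J.mulVecLin →
    ∃ (MA : Matrix (Fin a) (Fin a) F) (MB : Matrix (Fin b) (Fin b) F),
      MB ≠ 0 ∧ IsNilpotent MA ∧ IsNilpotent MB ∧
      MB * J = J * MA ∧ MB * X = X * MA := by
  induction a using Nat.strong_induction_on with
  | _ a IH =>
  intro b hab J X hJ
  by_cases hcase : ∃ u : Fin b → F, u ≠ 0 ∧ u ᵥ* J = 0 ∧ u ᵥ* X = 0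
  · -- Case 1 : common left null vector
    obtain ⟨u, hu0, huJ, huX⟩ := hcase
    -- find w ≠ 0 with u ⬝ᵥ w = 0
    let φ : (Fin b → F) →ₗ[F] F :=
      { toFun := fun w => u ⬝ᵥ w
        map_add' := fun x y => dotProduct_add u x y
        map_smul' := fun c x => by simp [dotProduct_smul] }
    have hkerφ : LinearMap.ker φ ≠ ⊥ := by
      intro hbot
      have h1 := LinearMap.finrank_range_add_finrank_ker φ
      rw [hbot, finrank_bot, Module.finrank_fin_fun] at h1
      have h2 : Module.finrank F ↥(LinearMap.range φ) ≤ 1 := by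
        simpa [Module.finrank_self] using Submodule.finrank_le (LinearMap.range φ)
      omega
    obtain ⟨w, hwmem, hw0⟩ := (Submodule.ne_bot_iff _).mp hkerφ
    have hwdot : u ⬝ᵥ w = 0 := hwmem
    refine ⟨0, vecMulVec w u, ?_, ⟨1, by simp⟩, ⟨2, ?_⟩, ?_, ?_⟩
    · -- nonzero
      obtain ⟨i, hi⟩ := Function.ne_iff.mp hw0
      obtain ⟨j, hj⟩ := Function.ne_iff.mp hu0
      intro h0
      have := congrFun (congrFun h0 i) j
      rw [vecMulVec_apply] at this
      simp only [Matrix.zero_apply] at this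
      exact (mul_ne_zero (by simpa using hi) (by simpa using hj)) this
    · -- square zero
      ext i j
      rw [pow_two]
      simp only [Matrix.mul_apply, vecMulVec_apply, Matrix.zero_apply]
      have : ∑ k, w i * u k * (w k * u j) = (w i * u j) * ∑ k, u k * w k := by
        rw [Finset.mul_sum]; exact Finset.sum_congr rfl (fun k _ => by ring)
      rw [this]
      have : ∑ k, u k * w k = u ⬝ᵥ w := rfl
      rw [this, hwdot, mul_zero]
    · -- MB * J = J * 0
      ext i j
      simp only [Matrix.mul_apply, vecMulVec_apply, Matrix.mul_zero, Matrix.zero_apply]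
      have : ∑ k, w i * u k * J k j = w i * ∑ k, u k * J k j := by
        rw [Finset.mul_sum]; exact Finset.sum_congr rfl (fun k _ => by ring)
      rw [this]
      have h2 : ∑ k, u k * J k j = 0 := by
        have := congrFun huJ j
        simpa [Matrix.vecMul, dotProduct] using this
      rw [h2, mul_zero]; simp
    · -- MB * X = X * 0
      ext i j
      simp only [Matrix.mul_apply, vecMulVec_apply, Matrix.mul_zero, Matrix.zero_apply]
      have : ∑ k, w i * u k * X k j = w i * ∑ k, u k * X k j := by
        rw [Finset.mul_sum]; exact Finset.sum_congr rfl (fun k _ => by ring)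
      rw [this]
      have h2 : ∑ k, u k * X k j = 0 := by
        have := congrFun huX j
        simpa [Matrix.vecMul, dotProduct] using this
      rw [h2, mul_zero]; simp
  · -- Case 2 : [J X] has full row rank
    have hker : ∀ u : Fin b → F, u ᵥ* J = 0 → u ᵥ* X = 0 → u = 0 := by
      intro u h1 h2
      by_contra h0
      exact hcase ⟨u, h0, h1, h2⟩
    set C : Matrix (Fin b) (Fin a ⊕ Fin a) F := fromCols J X with hC
    have hCt : Function.Injective Cᵀ.mulVecLin := by
      have hz : ∀ u, Cᵀ.mulVecLin u = 0 → u = 0 := by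
        intro u hu
        rw [Matrix.mulVecLin_apply, Matrix.mulVec_transpose, hC,
          Matrix.vecMul_fromCols] at hu
        apply hker
        · funext j; exact congrFun hu (Sum.inl j)
        · funext j; exact congrFun hu (Sum.inr j)
      intro x y hxy
      have : Cᵀ.mulVecLin (x - y) = 0 := by rw [map_sub, hxy, sub_self]
      exact sub_eq_zero.mp (hz _ this)
    have hrankCt : Module.finrank F ↥(LinearMap.range Cᵀ.mulVecLin) = b := by
      rw [LinearMap.finrank_range_of_inj hCt, Module.finrank_fin_fun]
    have hrankC : Module.finrank F ↥(LinearMap.range C.mulVecLin) = b := by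
      have h1 : Cᵀ.rank = b := hrankCt
      have h2 : Cᵀ.rank = C.rank := Matrix.rank_transpose C
      have h3 : C.rank = Module.finrank F ↥(LinearMap.range C.mulVecLin) := rfl
      omega
    have hCsurj : Function.Surjective C.mulVecLin := by
      rw [← LinearMap.range_eq_top]
      exact Submodule.eq_top_of_finrank_eq (by rw [hrankC, Module.finrank_fin_fun])
    have hsurj : ∀ y : Fin b → F, ∃ p q : Fin a → F, J *ᵥ p + X *ᵥ q = y := by
      intro y
      obtain ⟨z, hz⟩ := hCsurj y
      refine ⟨z ∘ Sum.inl, z ∘ Sum.inr, ?_⟩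
      rw [← Matrix.fromCols_mulVec_sumElim J X (z ∘ Sum.inl) (z ∘ Sum.inr)]
      rw [Sum.elim_comp_inl_inr]
      exact hz
    -- the submodule K and its dimension
    set Rj : Submodule F (Fin b → F) := LinearMap.range J.mulVecLin with hRj
    set K : Submodule F (Fin a → F) := Submodule.comap X.mulVecLin Rj with hK
    set a₁ : ℕ := Module.finrank F ↥K with ha₁
    set ψ : (Fin a → F) →ₗ[F] ((Fin b → F) ⧸ Rj) := Rj.mkQ ∘ₗ X.mulVecLin with hψ
    have hkerψ : LinearMap.ker ψ = K := by
      rw [hψ, LinearMap.ker_comp, Submodule.ker_mkQ]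
    have hranψ : LinearMap.range ψ = ⊤ := by
      rw [LinearMap.range_eq_top]
      intro y
      obtain ⟨x, hx⟩ := Rj.mkQ_surjective y
      obtain ⟨p, q, hpq⟩ := hsurj x
      refine ⟨q, ?_⟩
      have : Rj.mkQ (J *ᵥ p) = 0 := by
        rw [Submodule.mkQ_apply, Submodule.Quotient.mk_eq_zero]
        exact ⟨p, rfl⟩
      have h2 : Rj.mkQ (J *ᵥ p + X *ᵥ q) = Rj.mkQ (X *ᵥ q) := by
        rw [map_add, this, zero_add]
      calc ψ q = Rj.mkQ (X *ᵥ q) := rfl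
      _ = Rj.mkQ (J *ᵥ p + X *ᵥ q) := h2.symm
      _ = y := by rw [hpq]; exact hx
    have e0 : Module.finrank F ↥Rj = a := by
      rw [hRj, LinearMap.finrank_range_of_inj hJ, Module.finrank_fin_fun]
    have e1 : Module.finrank F ((Fin b → F) ⧸ Rj) + a = b := by
      have := Submodule.finrank_quotient_add_finrank Rj
      rw [e0, Module.finrank_fin_fun] at this
      exact this
    have e2 : Module.finrank F ((Fin b → F) ⧸ Rj) + a₁ = a := by
      have := LinearMap.finrank_range_add_finrank_ker ψ
      rw [hkerψ, hranψ, Module.finrank_fin_fun, finrank_top] at this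
      exact this
    have ha₁a : a₁ + 2 ≤ a := by omega
    have ha₁lt : a₁ < a := by omega
    -- basis matrix of K
    set bK : Module.Basis (Fin a₁) F ↥K := Module.finBasis F ↥K with hbK
    set P : Matrix (Fin a) (Fin a₁) F := basisMat K bK with hP
    have hPinj : Function.Injective P.mulVecLin := basisMat_injective K bK
    -- the matrix Q
    have hQex : ∀ c : Fin a₁, ∃ q : Fin a → F, J *ᵥ q = X *ᵥ ((bK c : Fin a → F)) := by
      intro c
      have : X.mulVecLin ((bK c : Fin a → F)) ∈ Rj := (bK c).2
      obtain ⟨q, hq⟩ := this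
      exact ⟨q, hq⟩
    set Q : Matrix (Fin a) (Fin a₁) F := Matrix.of fun i c => Classical.choose (hQex c) i with hQ
    have hQcol : ∀ c, J *ᵥ (fun i => Q i c) = X *ᵥ (fun i => P i c) := by
      intro c
      exact Classical.choose_spec (hQex c)
    have hXP : X * P = J * Q := by
      ext i c
      rw [congrFun (col_mul X P c) i, congrFun (col_mul J Q c) i]
      exact (congrFun (hQcol c) i).symm
    -- recursive call
    obtain ⟨MA₁, MA, hMA0, hnA₁, hnA, hMP, hMQ⟩ := IH a₁ ha₁lt a ha₁a P Q hPinj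
    -- well-definedness
    have hwell : ∀ u w : Fin a → F, J *ᵥ u + X *ᵥ w = 0 →
        J *ᵥ (MA *ᵥ u) + X *ᵥ (MA *ᵥ w) = 0 := by
      intro u w h0
      have hwK : w ∈ K := by
        rw [hK, Submodule.mem_comap]
        refine ⟨-u, ?_⟩
        simp only [Matrix.mulVecLin_apply, Matrix.mulVec_neg]
        exact (eq_neg_of_add_eq_zero_right h0).symm
      obtain ⟨c, hc⟩ := exists_basisMat_mulVec K bK w hwK
      rw [← hP] at hc
      have h1 : X *ᵥ w = J *ᵥ (Q *ᵥ c) := by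
        rw [← hc, Matrix.mulVec_mulVec, Matrix.mulVec_mulVec, hXP]
      have h2 : J *ᵥ (u + Q *ᵥ c) = 0 := by
        rw [Matrix.mulVec_add, ← h1]
        exact h0
      have h3 : u = -(Q *ᵥ c) := by
        have hh : J.mulVecLin (u + Q *ᵥ c) = J.mulVecLin 0 := by
          simpa [Matrix.mulVecLin_apply] using h2
        exact eq_neg_of_add_eq_zero_left (hJ hh)
      rw [h3, ← hc]
      have k1 : MA *ᵥ (Q *ᵥ c) = Q *ᵥ (MA₁ *ᵥ c) := by
        rw [Matrix.mulVec_mulVec, Matrix.mulVec_mulVec, hMQ]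
      have k2 : MA *ᵥ (P *ᵥ c) = P *ᵥ (MA₁ *ᵥ c) := by
        rw [Matrix.mulVec_mulVec, Matrix.mulVec_mulVec, hMP]
      rw [Matrix.mulVec_neg, Matrix.mulVec_neg, k1, k2]
      simp only [Matrix.mulVec_mulVec, ← Matrix.mul_assoc, hXP, neg_add_cancel]
    -- construct MB
    have hsurj' := hsurj
    choose pf qf hpq using hsurj'
    set L1 : (Fin a → F) →ₗ[F] (Fin b → F) := J.mulVecLin ∘ₗ MA.mulVecLin with hL1
    set L2 : (Fin a → F) →ₗ[F] (Fin b → F) := X.mulVecLin ∘ₗ MA.mulVecLin with hL2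
    set MB : Matrix (Fin b) (Fin b) F :=
      Matrix.of fun r i => (L1 (pf (Pi.single i 1)) + L2 (qf (Pi.single i 1))) r with hMB
    have hMBvec : ∀ u w : Fin a → F, MB *ᵥ (J *ᵥ u + X *ᵥ w) = L1 u + L2 w := by
      intro u w
      set y := J *ᵥ u + X *ᵥ w with hy
      have hexp : MB *ᵥ y = ∑ i, y i • (L1 (pf (Pi.single i 1)) + L2 (qf (Pi.single i 1))) := by
        funext r
        rw [Finset.sum_apply]
        simp [hMB, Matrix.mulVec, dotProduct, Pi.smul_apply, smul_eq_mul, mul_comm]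
      set U : Fin a → F := ∑ i, y i • pf (Pi.single i 1) with hU
      set Wv : Fin a → F := ∑ i, y i • qf (Pi.single i 1) with hWv
      have hexp2 : MB *ᵥ y = L1 U + L2 Wv := by
        rw [hexp, hU, hWv, _root_.map_sum, _root_.map_sum, ← Finset.sum_add_distrib]
        exact Finset.sum_congr rfl (fun i _ => by rw [smul_add, LinearMap.map_smul, LinearMap.map_smul])
      have hJU : J *ᵥ U = ∑ i, y i • (J *ᵥ pf (Pi.single i 1)) := by
        show J.mulVecLin U = _
        rw [hU, _root_.map_sum]
        exact Finset.sum_congr rfl (fun i _ => by rw [LinearMap.map_smul]; rfl)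
      have hXW : X *ᵥ Wv = ∑ i, y i • (X *ᵥ qf (Pi.single i 1)) := by
        show X.mulVecLin Wv = _
        rw [hWv, _root_.map_sum]
        exact Finset.sum_congr rfl (fun i _ => by rw [LinearMap.map_smul]; rfl)
      have hyd : J *ᵥ U + X *ᵥ Wv = y := by
        rw [hJU, hXW, ← Finset.sum_add_distrib]
        have hterm : ∀ i, y i • (J *ᵥ pf (Pi.single i 1)) + y i • (X *ᵥ qf (Pi.single i 1))
            = Pi.single i (y i) := by
          intro i
          rw [← smul_add, hpq (Pi.single i 1)]
          funext t
          simp [Pi.single_apply]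
        rw [Finset.sum_congr rfl (fun i _ => hterm i), Finset.univ_sum_single]
      have hdiff : J *ᵥ (U - u) + X *ᵥ (Wv - w) = 0 := by
        rw [Matrix.mulVec_sub, Matrix.mulVec_sub, sub_add_sub_comm, hyd, ← hy, sub_self]
      have h0 : L1 (U - u) + L2 (Wv - w) = 0 := hwell _ _ hdiff
      rw [map_sub, map_sub, sub_add_sub_comm, sub_eq_zero] at h0
      rw [hexp2, h0]
    have hMBJ : MB * J = J * MA := by
      apply matrix_eq_of_mulVec
      intro v
      rw [← Matrix.mulVec_mulVec, ← Matrix.mulVec_mulVec]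
      have h := hMBvec v 0
      simp only [Matrix.mulVec_zero, add_zero, map_zero] at h
      exact h
    have hMBX : MB * X = X * MA := by
      apply matrix_eq_of_mulVec
      intro v
      rw [← Matrix.mulVec_mulVec, ← Matrix.mulVec_mulVec]
      have h := hMBvec 0 v
      simp only [Matrix.mulVec_zero, zero_add, map_zero] at h
      exact h
    obtain ⟨k, hk⟩ := id hnA
    have hpow : ∀ (j : ℕ) (u w : Fin a → F),
        (MB ^ j) *ᵥ (J *ᵥ u + X *ᵥ w) = J *ᵥ ((MA ^ j) *ᵥ u) + X *ᵥ ((MA ^ j) *ᵥ w) := by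
      intro j
      induction j with
      | zero => intro u w; simp [Matrix.one_mulVec]
      | succ j ih =>
        intro u w
        rw [pow_succ, ← Matrix.mulVec_mulVec, hMBvec u w,
          show L1 u + L2 w = J *ᵥ (MA *ᵥ u) + X *ᵥ (MA *ᵥ w) from rfl,
          ih (MA *ᵥ u) (MA *ᵥ w)]
        simp [Matrix.mulVec_mulVec, pow_succ, Matrix.mul_assoc]
    have hMBk : MB ^ k = 0 := by
      apply matrix_eq_of_mulVec
      intro v
      obtain ⟨p, q, hpqv⟩ := hsurj v
      rw [← hpqv, hpow k p q, hk]
      simp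
    have hMBne : MB ≠ 0 := by
      have hex : ∃ i j, MA i j ≠ 0 := by
        by_contra hno
        push_neg at hno
        exact hMA0 (by ext i j; simpa using hno i j)
      obtain ⟨i, j, hij⟩ := hex
      have hv : MA *ᵥ Pi.single j 1 ≠ 0 := by
        intro h0
        have := congrFun h0 i
        rw [Matrix.mulVec_single] at this
        simp only [mul_one, Pi.zero_apply] at this
        exact hij (by simpa using this)
      have hJv : J *ᵥ (MA *ᵥ Pi.single j 1) ≠ 0 := by
        intro h0
        apply hv
        apply hJ
        simpa [Matrix.mulVecLin_apply] using h0
      intro hMB0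
      apply hJv
      have h := hMBvec (Pi.single j 1) 0
      simp only [Matrix.mulVec_zero, add_zero, map_zero] at h
      rw [hMB0] at h
      simp only [Matrix.zero_mulVec] at h
      exact h.symm
    exact ⟨MA, MB, hMBne, hnA, ⟨k, hMBk⟩, hMBJ, hMBX⟩

private lemma isNilpotent_fromBlocks_lower {F : Type*} [Field F] {n o : Type*}
    [Fintype n] [Fintype o] [DecidableEq n] [DecidableEq o]
    {A : Matrix n n F} {D : Matrix o o F} (C : Matrix o n F)
    (hA : IsNilpotent A) (hD : IsNilpotent D) :
    IsNilpotent (Matrix.fromBlocks A 0 C D) := by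
  obtain ⟨ka, hka⟩ := hA
  obtain ⟨kd, hkd⟩ := hD
  have h : ∀ j : ℕ, ∃ E, (Matrix.fromBlocks A 0 C D) ^ j
      = Matrix.fromBlocks (A ^ j) 0 E (D ^ j) := by
    intro j
    induction j with
    | zero => exact ⟨0, by rw [pow_zero, pow_zero, pow_zero, Matrix.fromBlocks_one]⟩
    | succ j ih =>
      obtain ⟨E, hE⟩ := ih
      refine ⟨E * A + D ^ j * C, ?_⟩
      rw [pow_succ, hE, Matrix.fromBlocks_multiply]
      congr 1 <;> simp [pow_succ]
  obtain ⟨E1, h1⟩ := h ka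
  obtain ⟨E2, h2⟩ := h kd
  refine ⟨(ka + kd) * 2, ?_⟩
  have h3 : (Matrix.fromBlocks A 0 C D) ^ (ka + kd)
      = Matrix.fromBlocks 0 0 (E1 * A ^ kd + D ^ ka * E2) 0 := by
    rw [pow_add, h1, h2, hka, hkd, Matrix.fromBlocks_multiply]
    congr 1 <;> simp
  rw [pow_mul, h3, pow_two, Matrix.fromBlocks_multiply]
  simp [Matrix.fromBlocks_zero]

/-- The main construction: blocks `N1 N2 N3` with the required relations. -/
private lemma crux {F : Type*} [Field F] (l m : ℕ) (hl : 0 < l) (hm : 2 ≤ m)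
    (W : Matrix (Fin l) (Fin l) F) (V : Matrix (Fin l) (Fin m) F) :
    ∃ (N1 : Matrix (Fin l) (Fin l) F) (N2 : Matrix (Fin m) (Fin l) F)
      (N3 : Matrix (Fin m) (Fin m) F),
      (N1 ≠ 0 ∨ N2 ≠ 0) ∧ IsNilpotent N1 ∧ IsNilpotent N3 ∧
      N1 * W - W * N1 = V * N2 ∧ N1 * V = V * N3 := by
  by_cases hV : Function.Injective V.mulVecLin
  · -- V injective
    have hml : m ≤ l := by
      have := LinearMap.finrank_le_finrank_of_injective hV
      rwa [Module.finrank_fin_fun, Module.finrank_fin_fun] at this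
    set Kv : Submodule F (Fin l → F) := LinearMap.ker Vᵀ.mulVecLin with hKv
    set d : ℕ := Module.finrank F ↥Kv with hd
    have hrkV : Module.finrank F ↥(LinearMap.range V.mulVecLin) = m := by
      rw [LinearMap.finrank_range_of_inj hV, Module.finrank_fin_fun]
    have hdm : d + m = l := by
      have h1 := LinearMap.finrank_range_add_finrank_ker Vᵀ.mulVecLin
      rw [Module.finrank_fin_fun] at h1
      have h2 : Module.finrank F ↥(LinearMap.range Vᵀ.mulVecLin) = m := by
        have e1 : Vᵀ.rank = V.rank := Matrix.rank_transpose V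
        have e2 : V.rank = m := hrkV
        exact e1.trans e2
      rw [h2, ← hKv, ← hd] at h1
      omega
    have hd2 : d + 2 ≤ l := by omega
    set bJ : Module.Basis (Fin d) F ↥Kv := Module.finBasis F ↥Kv with hbJ
    set J : Matrix (Fin l) (Fin d) F := basisMat Kv bJ with hJ
    have hJinj : Function.Injective J.mulVecLin := basisMat_injective Kv bJ
    obtain ⟨MA, MB, hMBne, hnA, hnB, hBJ, hBX⟩ :=
      key_lemma d l hd2 J (Wᵀ * J) hJinj
    set N1 : Matrix (Fin l) (Fin l) F := MBᵀ with hN1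
    have hN1nil : IsNilpotent N1 := by
      obtain ⟨k, hk⟩ := hnB
      exact ⟨k, by rw [hN1, ← Matrix.transpose_pow, hk, Matrix.transpose_zero]⟩
    have hN1ne : N1 ≠ 0 := by
      intro h0
      apply hMBne
      ext i j
      have := congrFun (congrFun h0 j) i
      simpa [hN1] using this
    -- basic identities
    have hVtJ : Vᵀ * J = 0 := by
      ext r c
      rw [congrFun (col_mul Vᵀ J c) r]
      have : (fun i => J i c) = ((bJ c : Fin l → F)) := basisMat_col Kv bJ c
      rw [this]
      have hmem : Vᵀ.mulVecLin ((bJ c : Fin l → F)) = 0 := (bJ c).2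
      rw [Matrix.mulVecLin_apply] at hmem
      rw [hmem]
      rfl
    have hJtV : Jᵀ * V = 0 := by
      have := congrArg Matrix.transpose hVtJ
      rwa [Matrix.transpose_mul, Matrix.transpose_transpose, Matrix.transpose_zero] at this
    have hJt1 : Jᵀ * N1 = MAᵀ * Jᵀ := by
      have := congrArg Matrix.transpose hBJ
      rwa [Matrix.transpose_mul, Matrix.transpose_mul] at this
    have hJt2 : Jᵀ * W * N1 = MAᵀ * (Jᵀ * W) := by
      have h := congrArg Matrix.transpose hBX
      simp only [Matrix.transpose_mul, Matrix.transpose_transpose] at h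
      exact h
    -- kernel of Jᵀ is the range of V
    set S : Submodule F (Fin l → F) := LinearMap.ker Jᵀ.mulVecLin with hS
    have hrange : LinearMap.range V.mulVecLin = S := by
      apply Submodule.eq_of_le_of_finrank_eq
      · rintro x ⟨y, rfl⟩
        rw [hS, LinearMap.mem_ker, Matrix.mulVecLin_apply, Matrix.mulVecLin_apply,
          Matrix.mulVec_mulVec, hJtV]
        simp
      · have h1 := LinearMap.finrank_range_add_finrank_ker Jᵀ.mulVecLin
        rw [Module.finrank_fin_fun] at h1
        have h2 : Module.finrank F ↥(LinearMap.range Jᵀ.mulVecLin) = d := by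
          have e1 : Jᵀ.rank = J.rank := Matrix.rank_transpose J
          have e2 : J.rank = d := by
            rw [show J.rank = Module.finrank F ↥(LinearMap.range J.mulVecLin) from rfl,
              LinearMap.finrank_range_of_inj hJinj, Module.finrank_fin_fun]
          exact e1.trans e2
        rw [h2, ← hS] at h1
        rw [hrkV]
        omega
    -- left inverse of V
    obtain ⟨g, hg⟩ := LinearMap.exists_leftInverse_of_injective V.mulVecLin
      (LinearMap.ker_eq_bot.mpr hV)
    set L : Matrix (Fin m) (Fin l) F := LinearMap.toMatrix' g with hL
    have hLV : L * V = 1 := by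
      apply matrix_eq_of_mulVec
      intro v
      rw [← Matrix.mulVec_mulVec, Matrix.one_mulVec]
      have h1 : L *ᵥ (V *ᵥ v) = g (V *ᵥ v) := by
        rw [hL, ← Matrix.toLin'_apply, Matrix.toLin'_toMatrix']
      rw [h1]
      have := congrFun (congrArg DFunLike.coe hg) v
      simpa using this
    have hVL : ∀ x, x ∈ LinearMap.range V.mulVecLin → V *ᵥ (L *ᵥ x) = x := by
      rintro x ⟨y, rfl⟩
      rw [Matrix.mulVecLin_apply, Matrix.mulVec_mulVec y L V, hLV, Matrix.one_mulVec]
    have hfix : ∀ {r : ℕ} (Cm : Matrix (Fin l) (Fin r) F),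
        Jᵀ * Cm = 0 → V * (L * Cm) = Cm := by
      intro r Cm hCm
      ext i j
      rw [Matrix.mul_assoc] at *
      rw [congrFun (col_mul V (L * Cm) j) i]
      have hcolmem : (fun i => Cm i j) ∈ LinearMap.range V.mulVecLin := by
        rw [hrange, hS, LinearMap.mem_ker, Matrix.mulVecLin_apply,
          ← col_mul Jᵀ Cm j, hCm]
        rfl
      have hcol : (fun s => (L * Cm) s j) = L *ᵥ (fun s => Cm s j) := col_mul L Cm j
      rw [hcol, hVL _ hcolmem]
    -- conditions on columns
    have hcolsV : Jᵀ * (N1 * V) = 0 := by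
      rw [← Matrix.mul_assoc, hJt1, Matrix.mul_assoc, hJtV, Matrix.mul_zero]
    have hcolsW : Jᵀ * (N1 * W - W * N1) = 0 := by
      rw [Matrix.mul_sub, ← Matrix.mul_assoc, hJt1, ← Matrix.mul_assoc, Matrix.mul_assoc MAᵀ,
        ← hJt2, Matrix.mul_assoc]
      simp
    set N3 : Matrix (Fin m) (Fin m) F := L * (N1 * V) with hN3def
    set N2 : Matrix (Fin m) (Fin l) F := L * (N1 * W - W * N1) with hN2def
    have hVN3 : V * N3 = N1 * V := hfix (N1 * V) hcolsV
    have hVN2 : V * N2 = N1 * W - W * N1 := hfix (N1 * W - W * N1) hcolsW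
    have hN3nil : IsNilpotent N3 := by
      obtain ⟨k, hk⟩ := hN1nil
      have hstep : ∀ j : ℕ, N3 ^ (j + 1) = L * (N1 ^ (j + 1) * V) := by
        intro j
        induction j with
        | zero => rw [pow_one, pow_one]
        | succ j ih =>
          rw [pow_succ, ih, hN3def]
          calc L * (N1 ^ (j + 1) * V) * (L * (N1 * V))
              = L * (N1 ^ (j + 1) * (V * (L * (N1 * V)))) := by
                rw [Matrix.mul_assoc, Matrix.mul_assoc]
            _ = L * (N1 ^ (j + 1) * (N1 * V)) := by rw [hVN3]
            _ = L * (N1 ^ (j + 1 + 1) * V) := by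
                rw [show N1 ^ (j + 1) * (N1 * V) = N1 ^ (j + 1 + 1) * V from by
                  rw [← Matrix.mul_assoc, ← pow_succ]]
      refine ⟨k + 1, ?_⟩
      have hk1 : N1 ^ (k + 1) = 0 := by rw [pow_succ, hk, Matrix.zero_mul]
      rw [hstep k, hk1, Matrix.zero_mul, Matrix.mul_zero]
    exact ⟨N1, N2, N3, Or.inl hN1ne, hN1nil, hN3nil, hVN2.symm, hVN3.symm⟩
  · -- V not injective
    have : ∃ c : Fin m → F, c ≠ 0 ∧ V *ᵥ c = 0 := by
      rw [Function.not_injective_iff] at hV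
      obtain ⟨x, y, hxy, hne⟩ := hV
      refine ⟨x - y, sub_ne_zero.mpr hne, ?_⟩
      have : V.mulVecLin (x - y) = 0 := by rw [map_sub, hxy, sub_self]
      simpa using this
    obtain ⟨c, hc0, hVc⟩ := this
    set i0 : Fin l := ⟨0, hl⟩
    set r : Fin l → F := Pi.single i0 1 with hr
    refine ⟨0, vecMulVec c r, 0, Or.inr ?_, ⟨1, by simp⟩, ⟨1, by simp⟩, ?_, ?_⟩
    · obtain ⟨i, hi⟩ := Function.ne_iff.mp hc0
      intro h0
      have := congrFun (congrFun h0 i) i0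
      rw [Matrix.vecMulVec_apply] at this
      simp [hr, Pi.single_apply] at this
      exact hi (by simpa using this)
    · have hmain : V * vecMulVec c r = 0 := by
        ext i j
        have hsum : (V * vecMulVec c r) i j
            = (∑ k, V i k * c k) * r j := by
          rw [Matrix.mul_apply, Finset.sum_mul]
          exact Finset.sum_congr rfl (fun k _ => by rw [Matrix.vecMulVec_apply]; ring)
        have hvc : ∑ k, V i k * c k = 0 := by
          have := congrFun hVc i
          simpa [Matrix.mulVec, dotProduct] using this
        rw [hsum, hvc, zero_mul, Matrix.zero_apply]
      rw [hmain]
      simp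
    · simp


/-- The block matrix `A = [[0, I, 0], [0, 0, 0], [0, 0, 0]]`, with block rows and columns
of sizes `l`, `l`, `m`. -/
def blockA (F : Type*) [Field F] (l m : ℕ) :
    Matrix (Fin l ⊕ Fin l ⊕ Fin m) (Fin l ⊕ Fin l ⊕ Fin m) F :=
  Matrix.of fun i j =>
    match i, j with
    | Sum.inl i, Sum.inr (Sum.inl j) => if i = j then 1 else 0
    | _, _ => 0

/-- The block matrix `B = [[0, W, V], [0, 0, 0], [0, 0, 0]]`, with block rows and columns
of sizes `l`, `l`, `m`. -/
def blockB (F : Type*) [Field F] (l m : ℕ)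
    (W : Matrix (Fin l) (Fin l) F) (V : Matrix (Fin l) (Fin m) F) :
    Matrix (Fin l ⊕ Fin l ⊕ Fin m) (Fin l ⊕ Fin l ⊕ Fin m) F :=
  Matrix.of fun i j =>
    match i, j with
    | Sum.inl i, Sum.inr (Sum.inl j) => W i j
    | Sum.inl i, Sum.inr (Sum.inr j) => V i j
    | _, _ => 0

/-- A matrix has the block form `[[N₁, 0, 0], [0, N₁, 0], [0, N₂, N₃]]`. -/
def HasBlockFormN {F : Type*} [Field F] {l m : ℕ}
    (N : Matrix (Fin l ⊕ Fin l ⊕ Fin m) (Fin l ⊕ Fin l ⊕ Fin m) F) : Prop :=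
  ∃ (N1 : Matrix (Fin l) (Fin l) F) (N2 : Matrix (Fin m) (Fin l) F)
    (N3 : Matrix (Fin m) (Fin m) F),
    N = Matrix.of fun i j =>
      match i, j with
      | Sum.inl i, Sum.inl j => N1 i j
      | Sum.inr (Sum.inl i), Sum.inr (Sum.inl j) => N1 i j
      | Sum.inr (Sum.inr i), Sum.inr (Sum.inl j) => N2 i j
      | Sum.inr (Sum.inr i), Sum.inr (Sum.inr j) => N3 i j
      | _, _ => 0

theorem statement16 (F : Type*) [Field F] [IsAlgClosed F] (l m : ℕ) (hl : 0 < l) (hm : 2 ≤ m)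
    (W : Matrix (Fin l) (Fin l) F) (V : Matrix (Fin l) (Fin m) F) :
    ∃ N : Matrix (Fin l ⊕ Fin l ⊕ Fin m) (Fin l ⊕ Fin l ⊕ Fin m) F,
      N ≠ 0 ∧ IsNilpotent N ∧ HasBlockFormN N ∧
      N * blockA F l m = blockA F l m * N ∧
      N * blockB F l m W V = blockB F l m W V * N := by
  obtain ⟨N1, N2, N3, hne, hn1, hn3, hc1, hc2⟩ := crux l m hl hm W V
  set M : Matrix (Fin l ⊕ Fin m) (Fin l ⊕ Fin m) F := Matrix.fromBlocks N1 0 N2 N3 with hM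
  set N : Matrix (Fin l ⊕ Fin l ⊕ Fin m) (Fin l ⊕ Fin l ⊕ Fin m) F :=
    Matrix.fromBlocks N1 0 0 M with hN
  have hA : blockA F l m = Matrix.fromBlocks 0
      (Matrix.fromCols (1 : Matrix (Fin l) (Fin l) F) (0 : Matrix (Fin l) (Fin m) F)) 0 0 := by
    ext i j
    rcases i with i | i | i <;> rcases j with j | j | j <;>
      simp [blockA, Matrix.fromBlocks, Matrix.fromCols, Matrix.one_apply]
  have hB : blockB F l m W V = Matrix.fromBlocks 0 (Matrix.fromCols W V) 0 0 := by
    ext i j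
    rcases i with i | i | i <;> rcases j with j | j | j <;>
      simp [blockB, Matrix.fromBlocks, Matrix.fromCols]
  have hKA : N1 * Matrix.fromCols (1 : Matrix (Fin l) (Fin l) F)
        (0 : Matrix (Fin l) (Fin m) F)
      = Matrix.fromCols (1 : Matrix (Fin l) (Fin l) F) (0 : Matrix (Fin l) (Fin m) F) * M := by
    rw [Matrix.mul_fromCols, hM, Matrix.fromCols_mul_fromBlocks]
    congr 1 <;> simp
  have hKB : N1 * Matrix.fromCols W V = Matrix.fromCols W V * M := by
    have e1 : N1 * W = W * N1 + V * N2 := by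
      rw [add_comm]
      exact sub_eq_iff_eq_add.mp hc1
    rw [Matrix.mul_fromCols, hM, Matrix.fromCols_mul_fromBlocks, e1, hc2]
    simp
  refine ⟨N, ?_, ?_, ?_, ?_, ?_⟩
  · intro h0
    rcases hne with h | h
    · apply h
      ext i j
      have := congrFun (congrFun h0 (Sum.inl i)) (Sum.inl j)
      simpa [hN] using this
    · apply h
      ext i j
      have := congrFun (congrFun h0 (Sum.inr (Sum.inr i))) (Sum.inr (Sum.inl j))
      simpa [hN, hM] using this
  · rw [hN]
    exact isNilpotent_fromBlocks_lower 0 hn1 (isNilpotent_fromBlocks_lower N2 hn1 hn3)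
  · refine ⟨N1, N2, N3, ?_⟩
    rw [hN]
    ext i j
    rcases i with i | i | i <;> rcases j with j | j | j <;> rfl
  · rw [hN, hA, Matrix.fromBlocks_multiply, Matrix.fromBlocks_multiply]
    simp only [Matrix.mul_zero, Matrix.zero_mul, add_zero, zero_add]
    rw [hKA]
  · rw [hN, hB, Matrix.fromBlocks_multiply, Matrix.fromBlocks_multiply]
    simp only [Matrix.mul_zero, Matrix.zero_mul, add_zero, zero_add]
    rw [hKB]
end
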